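/- (Fine's consistency criterion) A vector (p_1,p_2,p_3,p_4,p_{13},p_{14},p_{23},p_{24}) lies in the CHSH polytope if and only if there exists a real number p_{12} such that both (p_1,p_2,p_3,p_{12},p_{13},p_{23}) and (p_1,p_2,p_4,p_{12},p_{14},p_{24}) lie in the Bell–Wigner polytope. -/

import Mathlib

/-- `{0,1}`-valued assignment as a real number. -/
noncomputable def bv (b : Bool) : ℝ := if b then 1 else 0

/-- Vertex of the CHSH polytope. -/
noncomputable def chshVertex (ε : Fin 4 → Bool) : Fin 8 → ℝ :=
  ![bv (ε 0), bv (ε 1), bv (ε 2), bv (ε 3),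
    bv (ε 0) * bv (ε 2), bv (ε 0) * bv (ε 3),
    bv (ε 1) * bv (ε 2), bv (ε 1) * bv (ε 3)]

/-- Vertex of the Bell–Wigner polytope. -/
noncomputable def bwVertex (ε : Fin 3 → Bool) : Fin 6 → ℝ :=
  ![bv (ε 0), bv (ε 1), bv (ε 2),
    bv (ε 0) * bv (ε 1), bv (ε 0) * bv (ε 2), bv (ε 1) * bv (ε 2)]

/-!
A point of either polytope is the vector of first and second moments of a probability
distribution on `{0,1}`-assignments. Summing out the fourth bit, resp. the third bit, of a CHSH
distribution gives two Bell–Wigner distributions, and `p₁₂` is their common moment of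
`ε₁ε₂`. Conversely, `1, p₁, p₂, p₁₂` determine the joint law of the first two bits, so two
Bell–Wigner distributions with these moments have the same marginal on them and can be glued,
conditionally independently given those two bits, into one CHSH distribution.
-/

open Set

section Marginals

variable {α β γ : Type*} [Fintype β] [Fintype γ]

def marginal₁₂ (w : α × β × γ → ℝ) (s : α × β) : ℝ := ∑ c, w (s.1, s.2, c)

def marginal₁₃ (w : α × β × γ → ℝ) (s : α × γ) : ℝ := ∑ b, w (s.1, b, s.2)

theorem sum_marginal₁₂ [Fintype α] (w : α × β × γ → ℝ) : ∑ s, marginal₁₂ w s = ∑ t, w t := by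
  simp only [marginal₁₂, Fintype.sum_prod_type]

theorem sum_marginal₁₃ [Fintype α] (w : α × β × γ → ℝ) : ∑ s, marginal₁₃ w s = ∑ t, w t := by
  simp only [marginal₁₃, Fintype.sum_prod_type]
  exact Finset.sum_congr rfl fun _ _ => Finset.sum_comm

theorem sum_marginal₁₂_eq_sum_marginal₁₃ (w : α × β × γ → ℝ) (a : α) :
    ∑ b, marginal₁₂ w (a, b) = ∑ c, marginal₁₃ w (a, c) :=
  Finset.sum_comm

theorem marginal₁₂_mem_stdSimplex [Fintype α] {w : α × β × γ → ℝ}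
    (hw : w ∈ stdSimplex ℝ (α × β × γ)) : marginal₁₂ w ∈ stdSimplex ℝ (α × β) :=
  ⟨fun _ => Finset.sum_nonneg fun _ _ => hw.1 _, (sum_marginal₁₂ w).trans hw.2⟩

theorem marginal₁₃_mem_stdSimplex [Fintype α] {w : α × β × γ → ℝ}
    (hw : w ∈ stdSimplex ℝ (α × β × γ)) : marginal₁₃ w ∈ stdSimplex ℝ (α × γ) :=
  ⟨fun _ => Finset.sum_nonneg fun _ _ => hw.1 _, (sum_marginal₁₃ w).trans hw.2⟩

theorem exists_coupling [Fintype α] {q : α × β → ℝ} {r : α × γ → ℝ}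
    (hq : q ∈ stdSimplex ℝ (α × β)) (hr : 0 ≤ r) (h : ∀ a, ∑ b, q (a, b) = ∑ c, r (a, c)) :
    ∃ w ∈ stdSimplex ℝ (α × β × γ), marginal₁₂ w = q ∧ marginal₁₃ w = r := by
  set w : α × β × γ → ℝ := fun t => q (t.1, t.2.1) * r (t.1, t.2.2) / ∑ b, q (t.1, b)
  have hq_zero : ∀ a b, ∑ b', q (a, b') = 0 → q (a, b) = 0 := fun a b h0 =>
    (Finset.sum_eq_zero_iff_of_nonneg fun b' _ => hq.1 (a, b')).1 h0 b (Finset.mem_univ _)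
  have hr_zero : ∀ a c, ∑ b, q (a, b) = 0 → r (a, c) = 0 := fun a c h0 =>
    (Finset.sum_eq_zero_iff_of_nonneg fun c _ => hr (a, c)).1 ((h a).symm.trans h0) c
      (Finset.mem_univ _)
  have hw₁₂ : marginal₁₂ w = q := by
    ext ⟨a, b⟩
    simp only [marginal₁₂, w]
    rw [← Finset.sum_div, ← Finset.mul_sum, ← h a]
    exact mul_div_cancel_of_imp (hq_zero a b)
  have hw₁₃ : marginal₁₃ w = r := by
    ext ⟨a, c⟩
    simp only [marginal₁₃, w]
    rw [← Finset.sum_div, ← Finset.sum_mul, mul_comm]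
    exact mul_div_cancel_of_imp (hr_zero a c)
  refine ⟨w, ⟨fun t => ?_, ?_⟩, hw₁₂, hw₁₃⟩
  · exact div_nonneg (mul_nonneg (hq.1 _) (hr _)) (Finset.sum_nonneg fun b _ => hq.1 _)
  · rw [← sum_marginal₁₂, hw₁₂, hq.2]

end Marginals

theorem convexHull_range_eq_image_stdSimplex {ι E : Type*} [Fintype ι] [AddCommGroup E]
    [Module ℝ E] (v : ι → E) :
    convexHull ℝ (range v) = (fun w => ∑ i, w i • v i) '' stdSimplex ℝ ι := by
  classical
  have hv : v = Fintype.linearCombination ℝ v ∘ fun i => Pi.single i 1 := by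
    ext1 i; simp [Fintype.linearCombination_apply_single]
  conv_lhs => rw [hv, range_comp, ← LinearMap.image_convexHull,
    convexHull_rangle_single_eq_stdSimplex]
  rfl

noncomputable def bwVertex₂ (s : (Bool × Bool) × Bool) : Fin 6 → ℝ :=
  bwVertex ![s.1.1, s.1.2, s.2]

noncomputable def chshVertex₂ (t : (Bool × Bool) × Bool × Bool) : Fin 8 → ℝ :=
  chshVertex ![t.1.1, t.1.2, t.2.1, t.2.2]

theorem range_bwVertex₂ : range bwVertex₂ = range bwVertex :=
  Function.Surjective.range_comp
    (fun ε => ⟨((ε 0, ε 1), ε 2), by ext i; fin_cases i <;> rfl⟩) bwVertex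

theorem range_chshVertex₂ : range chshVertex₂ = range chshVertex :=
  Function.Surjective.range_comp
    (fun ε => ⟨((ε 0, ε 1), ε 2, ε 3), by ext i; fin_cases i <;> rfl⟩) chshVertex

def bwToChshFst : (Fin 6 → ℝ) →ₗ[ℝ] Fin 8 → ℝ where
  toFun x := ![x 0, x 1, x 2, 0, x 4, 0, x 5, 0]
  map_add' x y := by ext i; fin_cases i <;> simp
  map_smul' c x := by ext i; fin_cases i <;> simp

def bwToChshSnd : (Fin 6 → ℝ) →ₗ[ℝ] Fin 8 → ℝ where
  toFun y := ![0, 0, 0, y 2, 0, y 4, 0, y 5]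
  map_add' x y := by ext i; fin_cases i <;> simp
  map_smul' c x := by ext i; fin_cases i <;> simp

def bwCommonPart : (Fin 6 → ℝ) →ₗ[ℝ] Fin 3 → ℝ where
  toFun x := ![x 0, x 1, x 3]
  map_add' x y := by ext i; fin_cases i <;> simp
  map_smul' c x := by ext i; fin_cases i <;> simp

noncomputable def pairMoments (a : Bool × Bool) : Fin 3 → ℝ :=
  ![bv a.1, bv a.2, bv a.1 * bv a.2]

theorem chshVertex₂_eq (a : Bool × Bool) (b c : Bool) :
    chshVertex₂ (a, b, c) =
      bwToChshFst (bwVertex₂ (a, b)) + bwToChshSnd (bwVertex₂ (a, c)) := by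
  ext i
  fin_cases i <;> simp [chshVertex₂, bwVertex₂, chshVertex, bwVertex, bwToChshFst, bwToChshSnd]

theorem bwCommonPart_bwVertex₂ (a : Bool × Bool) (b : Bool) :
    bwCommonPart (bwVertex₂ (a, b)) = pairMoments a := by
  ext i; fin_cases i <;> simp [bwVertex₂, bwVertex, bwCommonPart, pairMoments]

theorem eq_of_sum_eq_of_sum_smul_pairMoments_eq {m m' : Bool × Bool → ℝ}
    (hsum : ∑ a, m a = ∑ a, m' a)
    (hmom : ∑ a, m a • pairMoments a = ∑ a, m' a • pairMoments a) : m = m' := by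
  have h₁ := congrFun hmom 0
  have h₂ := congrFun hmom 1
  have h₁₂ := congrFun hmom 2
  simp only [Finset.sum_apply, Pi.smul_apply, smul_eq_mul, pairMoments, bv, Fintype.sum_prod_type,
    Fintype.sum_bool, Matrix.cons_val_zero, Matrix.cons_val_one, Matrix.cons_val_two,
    Matrix.tail_cons, Matrix.head_cons, if_true, if_false, Bool.false_eq_true, mul_one,
    mul_zero] at hsum h₁ h₂ h₁₂
  ext ⟨_ | _, _ | _⟩ <;> linarith

theorem bwCommonPart_sum_smul_bwVertex₂ (q : (Bool × Bool) × Bool → ℝ) :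
    bwCommonPart (∑ s, q s • bwVertex₂ s) = ∑ a, (∑ b, q (a, b)) • pairMoments a := by
  simp only [map_sum, map_smul, Fintype.sum_prod_type, bwCommonPart_bwVertex₂, Finset.sum_smul]

theorem sum_smul_chshVertex₂ (w : (Bool × Bool) × Bool × Bool → ℝ) :
    ∑ t, w t • chshVertex₂ t =
      bwToChshFst (∑ s, marginal₁₂ w s • bwVertex₂ s) +
        bwToChshSnd (∑ s, marginal₁₃ w s • bwVertex₂ s) := by
  simp only [marginal₁₂, marginal₁₃, map_sum, map_smul, Fintype.sum_prod_type, Finset.sum_smul,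
    chshVertex₂_eq, smul_add, Finset.sum_add_distrib]
  congr 1
  exact Finset.sum_congr rfl fun _ _ => Finset.sum_congr rfl fun _ _ => Finset.sum_comm

theorem mem_convexHull_chshVertex_iff (x : Fin 8 → ℝ) :
    x ∈ convexHull ℝ (range chshVertex) ↔
      ∃ X ∈ convexHull ℝ (range bwVertex), ∃ Y ∈ convexHull ℝ (range bwVertex),
        bwCommonPart X = bwCommonPart Y ∧ bwToChshFst X + bwToChshSnd Y = x := by
  simp only [← range_chshVertex₂, ← range_bwVertex₂, convexHull_range_eq_image_stdSimplex]
  constructor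
  · rintro ⟨w, hw, rfl⟩
    refine ⟨_, ⟨_, marginal₁₂_mem_stdSimplex hw, rfl⟩, _, ⟨_, marginal₁₃_mem_stdSimplex hw, rfl⟩,
      ?_, (sum_smul_chshVertex₂ w).symm⟩
    simp only [bwCommonPart_sum_smul_bwVertex₂, sum_marginal₁₂_eq_sum_marginal₁₃]
  · rintro ⟨_, ⟨q, hq, rfl⟩, _, ⟨r, hr, rfl⟩, hqr, rfl⟩
    have hmarg : (fun a => ∑ b, q (a, b)) = fun a => ∑ c, r (a, c) := by
      refine eq_of_sum_eq_of_sum_smul_pairMoments_eq ?_ ?_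
      · simp only [← Fintype.sum_prod_type, hq.2, hr.2]
      · simpa only [bwCommonPart_sum_smul_bwVertex₂] using hqr
    obtain ⟨w, hw, rfl, rfl⟩ := exists_coupling hq hr.1 (congrFun hmarg)
    exact ⟨w, hw, sum_smul_chshVertex₂ w⟩

/-- Fine's consistency criterion: `(p₁,p₂,p₃,p₄,p₁₃,p₁₄,p₂₃,p₂₄)` lies
in the CHSH polytope iff there exists `p₁₂ ∈ ℝ` such that both
`(p₁,p₂,p₃,p₁₂,p₁₃,p₂₃)` and `(p₁,p₂,p₄,p₁₂,p₁₄,p₂₄)` lie in the Bell–Wigner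
polytope. -/
theorem chsh_iff_common_bellWigner_extension
    (p1 p2 p3 p4 p13 p14 p23 p24 : ℝ) :
    (![p1, p2, p3, p4, p13, p14, p23, p24]
        ∈ convexHull ℝ (Set.range chshVertex)) ↔
      ∃ p12 : ℝ,
        (![p1, p2, p3, p12, p13, p23] ∈ convexHull ℝ (Set.range bwVertex)) ∧
        (![p1, p2, p4, p12, p14, p24] ∈ convexHull ℝ (Set.range bwVertex)) := by
  rw [mem_convexHull_chshVertex_iff]
  constructor
  · rintro ⟨X, hX, Y, hY, hXY, hx⟩
    have hc := fun i => congrFun hXY i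
    have hs := fun i => congrFun hx i
    simp only [bwCommonPart, bwToChshFst, bwToChshSnd, LinearMap.coe_mk, AddHom.coe_mk,
      Pi.add_apply, Fin.forall_fin_succ, Matrix.cons_val_zero, Matrix.cons_val_succ,
      Matrix.cons_val_fin_one, forall_const, add_zero, zero_add] at hc hs
    obtain ⟨h0, h1, h3⟩ := hc
    obtain ⟨e1, e2, e3, e4, e13, e14, e23, e24⟩ := hs
    have hX' : ![p1, p2, p3, X 3, p13, p23] = X := by
      ext i; fin_cases i <;> simp [e1, e2, e3, e13, e23]
    have hY' : ![p1, p2, p4, X 3, p14, p24] = Y := by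
      ext i; fin_cases i <;> simp [← e1, ← e2, h0, h1, h3, e4, e14, e24]
    exact ⟨X 3, hX' ▸ hX, hY' ▸ hY⟩
  · rintro ⟨p12, hX, hY⟩
    refine ⟨_, hX, _, hY, ?_, ?_⟩ <;> ext i <;> fin_cases i <;>
      simp [bwCommonPart, bwToChshFst, bwToChshSnd]
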